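/- arXiv:1907.01049 — 2 statements merged into one kernel-verified Lean document; each statement's English description precedes it below -/
import Mathlib

section
/- Let X = (X_1,...,X_q) be a random vector with q = q_1 + q_0, each X_k continuously distributed, and let T(x) = (1/q_1)∑_{k=1}^{q_1} x_k − (1/q_0)∑_{k=q_1+1}^{q} x_k. Let 𝔊 be the set of permutations g of {1,...,q} with g(1)<...<g(q_1) and g(q_1+1)<...<g(q), and let T^{(1)}(X,𝔊) ≤ ... ≤ T^{(|𝔊|)}(X,𝔊) denote the ordered values of T(gX) over g ∈ 𝔊. Then with probability one, T(X) > T^{(|𝔊|−1)}(X,𝔊) if and only if min{X_1,...,X_{q_1}} > max{X_{q_1+1},...,X_q}. -/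
open MeasureTheory ProbabilityTheory Finset Filter
open scoped NNReal ENNReal

noncomputable section

/-- Comparison-of-means statistic. -/
def Tstat (q1 q0 : ℕ) (x : Fin (q1 + q0) → ℝ) : ℝ :=
  (∑ k : Fin (q1 + q0), if (k : ℕ) < q1 then x k else 0) / q1
    - (∑ k : Fin (q1 + q0), if q1 ≤ (k : ℕ) then x k else 0) / q0

/-- The set 𝔊 of block-monotone permutations. -/
def permSet (q1 q0 : ℕ) : Finset (Equiv.Perm (Fin (q1 + q0))) :=
  Finset.univ.filter fun g =>
    ∀ i j : Fin (q1 + q0), i < j → ((j : ℕ) < q1 ∨ q1 ≤ (i : ℕ)) → g i < g j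

theorem permSet_nonempty (q1 q0 : ℕ) : (permSet q1 q0).Nonempty :=
  ⟨1, Finset.mem_filter.mpr ⟨Finset.mem_univ _, fun i j hij _ => by simpa using hij⟩⟩

/-- The sorted (ascending) list of permutation values `T(gx)`, `g ∈ 𝔊`. -/
def permVals (q1 q0 : ℕ) (x : Fin (q1 + q0) → ℝ) : List ℝ :=
  ((permSet q1 q0).val.map fun g => Tstat q1 q0 fun k => x (g k)).sort (· ≤ ·)

/-- `ordStat q1 q0 x j = T^{(j)}(x, 𝔊)`, the `j`-th smallest permutation value (1-indexed). -/
def ordStat (q1 q0 : ℕ) (x : Fin (q1 + q0) → ℝ) (j : ℕ) : ℝ :=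
  (permVals q1 q0 x).getD (j - 1) 0

/-- Minimum over the treatment block. -/
def bmin (q1 q0 : ℕ) (h : 0 < q1) (x : Fin (q1 + q0) → ℝ) : ℝ :=
  Finset.univ.inf' ⟨⟨0, h⟩, Finset.mem_univ _⟩ fun i : Fin q1 => x (Fin.castAdd q0 i)

/-- Maximum over the control block. -/
def bmax (q1 q0 : ℕ) (h : 0 < q0) (x : Fin (q1 + q0) → ℝ) : ℝ :=
  Finset.univ.sup' ⟨⟨0, h⟩, Finset.mem_univ _⟩ fun i : Fin q0 => x (Fin.natAdd q1 i)

/-- Standard normal CDF. -/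
def stdΦ (x : ℝ) : ℝ := ProbabilityTheory.cdf (gaussianReal 0 1) x

/-- Standard normal quantile function. -/
def stdΦinv : ℝ → ℝ := Function.invFun stdΦ

end
noncomputable section SLEaux
open Finset

variable {q1 q0 : ℕ}

def Bset (q1 q0 : ℕ) : Finset (Fin (q1 + q0)) := Finset.univ.filter fun k => (k : ℕ) < q1

lemma mem_Bset {k : Fin (q1 + q0)} : k ∈ Bset q1 q0 ↔ (k : ℕ) < q1 := by
  simp [Bset]

lemma Bset_eq_image : Bset q1 q0 = Finset.univ.image (Fin.castAdd q0) := by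
  ext k
  simp only [mem_Bset, Finset.mem_image, Finset.mem_univ, true_and]
  constructor
  · intro h; exact ⟨⟨(k : ℕ), h⟩, by apply Fin.ext; rfl⟩
  · rintro ⟨i, rfl⟩; exact i.isLt

lemma compl_Bset_eq_image : (Bset q1 q0)ᶜ = Finset.univ.image (Fin.natAdd q1) := by
  ext k
  simp only [Finset.mem_compl, mem_Bset, not_lt, Finset.mem_image, Finset.mem_univ, true_and]
  constructor
  · intro h
    refine ⟨⟨(k : ℕ) - q1, by omega⟩, ?_⟩
    apply Fin.ext
    simp only [Fin.natAdd_mk]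
    omega
  · rintro ⟨i, rfl⟩; simp [Fin.natAdd]

lemma card_Bset : (Bset q1 q0).card = q1 := by
  rw [Bset_eq_image, Finset.card_image_of_injective _ (Fin.castAdd_injective q1 q0)]
  simp

lemma card_compl_Bset : (Bset q1 q0)ᶜ.card = q0 := by
  rw [Finset.card_compl, card_Bset]
  simp

def Tf (q1 q0 : ℕ) (x : Fin (q1 + q0) → ℝ) (A : Finset (Fin (q1 + q0))) : ℝ :=
  (∑ k ∈ A, x k) / q1 - (∑ k ∈ Aᶜ, x k) / q0

lemma compl_Bset_filter :
    (Bset q1 q0)ᶜ = Finset.univ.filter fun k : Fin (q1 + q0) => q1 ≤ (k : ℕ) := by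
  ext k; simp [mem_Bset, not_lt]

lemma Tstat_eq_Tf (x : Fin (q1 + q0) → ℝ) : Tstat q1 q0 x = Tf q1 q0 x (Bset q1 q0) := by
  unfold Tstat Tf
  rw [compl_Bset_filter]
  simp only [Bset]
  rw [Finset.sum_filter, Finset.sum_filter]

lemma image_compl_perm (g : Equiv.Perm (Fin (q1 + q0))) (s : Finset (Fin (q1 + q0))) :
    (s.image g)ᶜ = sᶜ.image g := by
  ext k
  simp only [Finset.mem_compl, Finset.mem_image]
  constructor
  · intro h
    refine ⟨g.symm k, fun hmem => h ⟨g.symm k, hmem, by simp⟩, by simp⟩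
  · rintro ⟨a, ha, rfl⟩ ⟨b, hb, hba⟩
    exact ha (g.injective hba ▸ hb)

lemma Tstat_perm (x : Fin (q1 + q0) → ℝ) (g : Equiv.Perm (Fin (q1 + q0))) :
    Tstat q1 q0 (fun k => x (g k)) = Tf q1 q0 x ((Bset q1 q0).image g) := by
  rw [Tstat_eq_Tf]
  unfold Tf
  rw [Finset.sum_image (fun a _ b _ h => g.injective h), image_compl_perm,
    Finset.sum_image (fun a _ b _ h => g.injective h)]

lemma sum_compl_eq (x : Fin (q1 + q0) → ℝ) (A : Finset (Fin (q1 + q0))) :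
    ∑ k ∈ Aᶜ, x k = (∑ k, x k) - ∑ k ∈ A, x k := by
  have := Finset.sum_add_sum_compl A x
  linarith

lemma Tf_lt_Tf (hq1 : 0 < q1) (hq0 : 0 < q0) (x : Fin (q1 + q0) → ℝ)
    {A A' : Finset (Fin (q1 + q0))} (h : ∑ k ∈ A, x k < ∑ k ∈ A', x k) :
    Tf q1 q0 x A < Tf q1 q0 x A' := by
  unfold Tf
  rw [sum_compl_eq, sum_compl_eq]
  have h1 : (0 : ℝ) < q1 := by exact_mod_cast hq1
  have h0 : (0 : ℝ) < q0 := by exact_mod_cast hq0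
  have e : ∀ S1 : ℝ, S1 / q1 - ((∑ k, x k) - S1) / q0
      = S1 * (1 / q1 + 1 / q0) - (∑ k, x k) / q0 := by
    intro S1; field_simp; ring
  rw [e, e]
  have hc : (0 : ℝ) < 1 / q1 + 1 / q0 := by positivity
  nlinarith

lemma mem_permSet {g : Equiv.Perm (Fin (q1 + q0))} :
    g ∈ permSet q1 q0 ↔
      ∀ i j : Fin (q1 + q0), i < j → ((j : ℕ) < q1 ∨ q1 ≤ (i : ℕ)) → g i < g j := by
  simp [permSet]

lemma one_mem_permSet : (1 : Equiv.Perm (Fin (q1 + q0))) ∈ permSet q1 q0 :=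
  mem_permSet.mpr fun i j hij _ => by simpa using hij

lemma fin_block_cases (k : Fin (q1 + q0)) :
    (∃ i : Fin q1, k = Fin.castAdd q0 i) ∨ (∃ i : Fin q0, k = Fin.natAdd q1 i) := by
  have hk := k.isLt
  rcases lt_or_ge (k : ℕ) q1 with h | h
  · exact Or.inl ⟨⟨(k : ℕ), h⟩, Fin.ext rfl⟩
  · refine Or.inr ⟨⟨(k : ℕ) - q1, by omega⟩, Fin.ext ?_⟩
    simp only [Fin.natAdd_mk]
    omega

lemma blk1_strictMono {g : Equiv.Perm (Fin (q1 + q0))} (hg : g ∈ permSet q1 q0) :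
    StrictMono fun i : Fin q1 => g (Fin.castAdd q0 i) := by
  intro i j hij
  refine mem_permSet.mp hg _ _ ?_ (Or.inl ?_)
  · rw [Fin.lt_def, Fin.coe_castAdd, Fin.coe_castAdd]
    exact Fin.lt_def.mp hij
  · simpa using j.isLt

lemma blk0_strictMono {g : Equiv.Perm (Fin (q1 + q0))} (hg : g ∈ permSet q1 q0) :
    StrictMono fun i : Fin q0 => g (Fin.natAdd q1 i) := by
  intro i j hij
  refine mem_permSet.mp hg _ _ ?_ (Or.inr ?_)
  · rw [Fin.lt_def, Fin.coe_natAdd, Fin.coe_natAdd]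
    exact Nat.add_lt_add_left (Fin.lt_def.mp hij) q1
  · simp

lemma card_image_Bset (g : Equiv.Perm (Fin (q1 + q0))) :
    ((Bset q1 q0).image g).card = q1 := by
  rw [Finset.card_image_of_injective _ g.injective, card_Bset]

lemma card_compl_image_Bset (g : Equiv.Perm (Fin (q1 + q0))) :
    ((Bset q1 q0).image g)ᶜ.card = q0 := by
  rw [Finset.card_compl, card_image_Bset]
  simp

lemma blk1_mem_image {g : Equiv.Perm (Fin (q1 + q0))} (i : Fin q1) :
    g (Fin.castAdd q0 i) ∈ (Bset q1 q0).image g :=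
  Finset.mem_image.mpr ⟨Fin.castAdd q0 i, mem_Bset.mpr i.isLt, rfl⟩

lemma blk0_mem_compl_image {g : Equiv.Perm (Fin (q1 + q0))} (i : Fin q0) :
    g (Fin.natAdd q1 i) ∈ ((Bset q1 q0).image g)ᶜ := by
  rw [image_compl_perm]
  refine Finset.mem_image.mpr ⟨Fin.natAdd q1 i, ?_, rfl⟩
  rw [Finset.mem_compl, mem_Bset]
  simp

lemma perm_eq_of_image_eq {g g' : Equiv.Perm (Fin (q1 + q0))}
    (hg : g ∈ permSet q1 q0) (hg' : g' ∈ permSet q1 q0)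
    (h : (Bset q1 q0).image g = (Bset q1 q0).image g') : g = g' := by
  have hcard : ((Bset q1 q0).image g).card = q1 := card_image_Bset g
  have hcardc : ((Bset q1 q0).image g)ᶜ.card = q0 := card_compl_image_Bset g
  have e1 : (fun i : Fin q1 => g (Fin.castAdd q0 i))
      = ((Bset q1 q0).image g).orderEmbOfFin hcard :=
    Finset.orderEmbOfFin_unique hcard (fun i => blk1_mem_image i) (blk1_strictMono hg)
  have e1' : (fun i : Fin q1 => g' (Fin.castAdd q0 i))
      = ((Bset q1 q0).image g).orderEmbOfFin hcard :=
    Finset.orderEmbOfFin_unique hcard (fun i => h ▸ blk1_mem_image i) (blk1_strictMono hg')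
  have e0 : (fun i : Fin q0 => g (Fin.natAdd q1 i))
      = ((Bset q1 q0).image g)ᶜ.orderEmbOfFin hcardc :=
    Finset.orderEmbOfFin_unique hcardc (fun i => blk0_mem_compl_image i) (blk0_strictMono hg)
  have e0' : (fun i : Fin q0 => g' (Fin.natAdd q1 i))
      = ((Bset q1 q0).image g)ᶜ.orderEmbOfFin hcardc :=
    Finset.orderEmbOfFin_unique hcardc (fun i => by rw [h]; exact blk0_mem_compl_image i)
      (blk0_strictMono hg')
  apply Equiv.ext
  intro k
  rcases fin_block_cases k with ⟨i, rfl⟩ | ⟨i, rfl⟩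
  · exact (congrFun e1 i).trans (congrFun e1' i).symm
  · exact (congrFun e0 i).trans (congrFun e0' i).symm

def blockPermFun (q1 q0 : ℕ) (A : Finset (Fin (q1 + q0))) (hA : A.card = q1)
    (hAc : Aᶜ.card = q0) : Fin (q1 + q0) → Fin (q1 + q0) :=
  fun k => Fin.addCases (fun i => A.orderEmbOfFin hA i) (fun i => Aᶜ.orderEmbOfFin hAc i) k

lemma blockPermFun_left {A : Finset (Fin (q1 + q0))} (hA : A.card = q1)
    (hAc : Aᶜ.card = q0) (i : Fin q1) :
    blockPermFun q1 q0 A hA hAc (Fin.castAdd q0 i) = A.orderEmbOfFin hA i :=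
  Fin.addCases_left i

lemma blockPermFun_right {A : Finset (Fin (q1 + q0))} (hA : A.card = q1)
    (hAc : Aᶜ.card = q0) (i : Fin q0) :
    blockPermFun q1 q0 A hA hAc (Fin.natAdd q1 i) = Aᶜ.orderEmbOfFin hAc i :=
  Fin.addCases_right i

lemma exists_perm_of_card {A : Finset (Fin (q1 + q0))} (hA : A.card = q1) :
    ∃ g ∈ permSet q1 q0, (Bset q1 q0).image g = A := by
  classical
  have hAc : Aᶜ.card = q0 := by rw [Finset.card_compl, hA]; simp
  have hfl := blockPermFun_left hA hAc
  have hfr := blockPermFun_right hA hAc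
  have hinj : Function.Injective (blockPermFun q1 q0 A hA hAc) := by
    intro a b hab
    rcases fin_block_cases a with ⟨i, rfl⟩ | ⟨i, rfl⟩ <;>
      rcases fin_block_cases b with ⟨j, rfl⟩ | ⟨j, rfl⟩
    · rw [hfl, hfl] at hab
      exact congrArg _ ((A.orderEmbOfFin hA).injective hab)
    · exfalso
      rw [hfl, hfr] at hab
      have h1 := A.orderEmbOfFin_mem hA i
      have h2 := Aᶜ.orderEmbOfFin_mem hAc j
      rw [hab] at h1
      exact (Finset.mem_compl.mp h2) h1
    · exfalso
      rw [hfr, hfl] at hab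
      have h1 := A.orderEmbOfFin_mem hA j
      have h2 := Aᶜ.orderEmbOfFin_mem hAc i
      rw [hab] at h2
      exact (Finset.mem_compl.mp h2) h1
    · rw [hfr, hfr] at hab
      exact congrArg _ ((Aᶜ.orderEmbOfFin hAc).injective hab)
  have hbij : Function.Bijective (blockPermFun q1 q0 A hA hAc) :=
    Finite.injective_iff_bijective.mp hinj
  refine ⟨Equiv.ofBijective _ hbij, ?_, ?_⟩
  · refine mem_permSet.mpr fun i j hij hcond => ?_
    have happ : ∀ k, Equiv.ofBijective _ hbij k = blockPermFun q1 q0 A hA hAc k :=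
      fun k => rfl
    rw [happ, happ]
    rcases hcond with hj | hi
    · have hi : (i : ℕ) < q1 := lt_trans (Fin.lt_def.mp hij) hj
      have hieq : i = Fin.castAdd q0 ⟨(i : ℕ), hi⟩ := Fin.ext rfl
      have hjeq : j = Fin.castAdd q0 ⟨(j : ℕ), hj⟩ := Fin.ext rfl
      rw [hieq, hjeq, hfl, hfl]
      refine (A.orderEmbOfFin hA).strictMono ?_
      rw [Fin.lt_def]
      exact Fin.lt_def.mp hij
    · have hj : q1 ≤ (j : ℕ) := le_trans hi (le_of_lt (Fin.lt_def.mp hij))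
      have hi2 := i.isLt
      have hj2 := j.isLt
      have hpi : (i : ℕ) - q1 < q0 := by omega
      have hpj : (j : ℕ) - q1 < q0 := by omega
      have hieq : i = Fin.natAdd q1 ⟨(i : ℕ) - q1, hpi⟩ := by
        apply Fin.ext
        simp only [Fin.natAdd_mk]
        omega
      have hjeq : j = Fin.natAdd q1 ⟨(j : ℕ) - q1, hpj⟩ := by
        apply Fin.ext
        simp only [Fin.natAdd_mk]
        omega
      have e_i : blockPermFun q1 q0 A hA hAc i = Aᶜ.orderEmbOfFin hAc ⟨(i : ℕ) - q1, hpi⟩ := by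
        conv_lhs => rw [hieq]
        exact hfr _
      have e_j : blockPermFun q1 q0 A hA hAc j = Aᶜ.orderEmbOfFin hAc ⟨(j : ℕ) - q1, hpj⟩ := by
        conv_lhs => rw [hjeq]
        exact hfr _
      refine lt_of_eq_of_lt e_i (lt_of_lt_of_eq ?_ e_j.symm)
      refine (Aᶜ.orderEmbOfFin hAc).strictMono ?_
      have hvlt := Fin.lt_def.mp hij
      rw [Fin.lt_def]
      simp only []
      omega
  · have hsub : (Bset q1 q0).image (Equiv.ofBijective _ hbij) ⊆ A := by
      intro k hk
      obtain ⟨b, hb, rfl⟩ := Finset.mem_image.mp hk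
      have hb1 : (b : ℕ) < q1 := mem_Bset.mp hb
      have hbeq : b = Fin.castAdd q0 ⟨(b : ℕ), hb1⟩ := Fin.ext rfl
      have happ : Equiv.ofBijective _ hbij b = blockPermFun q1 q0 A hA hAc b := rfl
      rw [happ, hbeq, hfl]
      exact A.orderEmbOfFin_mem hA _
    refine Finset.eq_of_subset_of_card_le hsub ?_
    rw [hA, Finset.card_image_of_injective _ (Equiv.ofBijective _ hbij).injective, card_Bset]

lemma bmin_le (hq1 : 0 < q1) (x : Fin (q1 + q0) → ℝ) (i : Fin q1) :
    bmin q1 q0 hq1 x ≤ x (Fin.castAdd q0 i) := by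
  unfold bmin
  exact Finset.inf'_le (fun i : Fin q1 => x (Fin.castAdd q0 i)) (Finset.mem_univ i)

lemma le_bmax (hq0 : 0 < q0) (x : Fin (q1 + q0) → ℝ) (i : Fin q0) :
    x (Fin.natAdd q1 i) ≤ bmax q1 q0 hq0 x := by
  unfold bmax
  exact Finset.le_sup' (fun i : Fin q0 => x (Fin.natAdd q1 i)) (Finset.mem_univ i)

lemma bmin_le_of_mem (hq1 : 0 < q1) (x : Fin (q1 + q0) → ℝ) {k : Fin (q1 + q0)}
    (hk : k ∈ Bset q1 q0) : bmin q1 q0 hq1 x ≤ x k := by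
  have h1 : (k : ℕ) < q1 := mem_Bset.mp hk
  have : k = Fin.castAdd q0 ⟨(k : ℕ), h1⟩ := Fin.ext rfl
  rw [this]
  exact bmin_le hq1 x _

lemma le_bmax_of_not_mem (hq0 : 0 < q0) (x : Fin (q1 + q0) → ℝ) {k : Fin (q1 + q0)}
    (hk : k ∉ Bset q1 q0) : x k ≤ bmax q1 q0 hq0 x := by
  have h1 : q1 ≤ (k : ℕ) := le_of_not_gt fun h => hk (mem_Bset.mpr h)
  have hk' := k.isLt
  have : k = Fin.natAdd q1 ⟨(k : ℕ) - q1, by omega⟩ := Fin.ext (by simp; omega)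
  rw [this]
  exact le_bmax hq0 x _

/-- Under separation, every nontrivial permutation strictly decreases the statistic. -/
lemma Tstat_lt_of_sep (hq1 : 0 < q1) (hq0 : 0 < q0) (x : Fin (q1 + q0) → ℝ)
    (hsep : bmax q1 q0 hq0 x < bmin q1 q0 hq1 x)
    {g : Equiv.Perm (Fin (q1 + q0))} (hg : g ∈ permSet q1 q0) (hgne : g ≠ 1) :
    Tstat q1 q0 (fun k => x (g k)) < Tstat q1 q0 x := by
  rw [Tstat_perm, Tstat_eq_Tf]
  apply Tf_lt_Tf hq1 hq0
  set A := (Bset q1 q0).image g with hA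
  set B := Bset q1 q0 with hB
  have hAcard : A.card = q1 := card_image_Bset g
  have hABne : A ≠ B := by
    intro hcontra
    apply hgne
    refine perm_eq_of_image_eq hg one_mem_permSet ?_
    rw [show (Bset q1 q0).image ⇑(1 : Equiv.Perm (Fin (q1 + q0))) = Bset q1 q0 by simp]
    exact hcontra
  have hBAne : (B \ A).Nonempty := by
    rw [Finset.sdiff_nonempty]
    intro hsub
    exact hABne (Finset.eq_of_subset_of_card_le hsub (by rw [hAcard, card_Bset])).symm
  have hcardeq : (A \ B).card = (B \ A).card :=
    Finset.card_sdiff_comm (by rw [hAcard, card_Bset])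
  have hup : ∀ k ∈ B \ A, bmin q1 q0 hq1 x ≤ x k := fun k hk =>
    bmin_le_of_mem hq1 x (Finset.mem_sdiff.mp hk).1
  have hdown : ∀ k ∈ A \ B, x k ≤ bmax q1 q0 hq0 x := fun k hk =>
    le_bmax_of_not_mem hq0 x (Finset.mem_sdiff.mp hk).2
  have h1 : ∑ k ∈ A \ B, x k ≤ (A \ B).card • bmax q1 q0 hq0 x :=
    Finset.sum_le_card_nsmul _ _ _ hdown
  have h2 : (B \ A).card • bmin q1 q0 hq1 x ≤ ∑ k ∈ B \ A, x k :=
    Finset.card_nsmul_le_sum _ _ _ hup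
  have hdpos : 0 < (B \ A).card := Finset.card_pos.mpr hBAne
  have h3 : ((B \ A).card : ℝ) * bmax q1 q0 hq0 x < ((B \ A).card : ℝ) * bmin q1 q0 hq1 x :=
    mul_lt_mul_of_pos_left hsep (by exact_mod_cast hdpos)
  have hsum : ∑ k ∈ A \ B, x k < ∑ k ∈ B \ A, x k := by
    rw [nsmul_eq_mul] at h1 h2
    rw [hcardeq] at h1
    linarith
  have eA : ∑ k ∈ A \ B, x k + ∑ k ∈ A ∩ B, x k = ∑ k ∈ A, x k := by
    rw [← Finset.sdiff_inter_self_left A B]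
    exact Finset.sum_sdiff (Finset.inter_subset_left)
  have eB : ∑ k ∈ B \ A, x k + ∑ k ∈ B ∩ A, x k = ∑ k ∈ B, x k := by
    rw [← Finset.sdiff_inter_self_left B A]
    exact Finset.sum_sdiff (Finset.inter_subset_left)
  rw [Finset.inter_comm] at eB
  linarith

lemma ka_mem (a : Fin q1) : Fin.castAdd q0 a ∈ Bset q1 q0 := mem_Bset.mpr a.isLt

lemma kb_not_mem (b : Fin q0) : Fin.natAdd q1 b ∉ Bset q1 q0 := by
  rw [mem_Bset]
  simp

lemma swapA_card (a : Fin q1) (b : Fin q0) :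
    (insert (Fin.natAdd q1 b) ((Bset q1 q0).erase (Fin.castAdd q0 a))).card = q1 := by
  have h1 : Fin.natAdd q1 b ∉ (Bset q1 q0).erase (Fin.castAdd q0 a) := fun h =>
    kb_not_mem b (Finset.mem_of_mem_erase h)
  rw [Finset.card_insert_of_notMem h1, Finset.card_erase_of_mem (ka_mem a), card_Bset]
  have := Fin.pos_iff_nonempty.mpr ⟨a⟩
  omega

lemma swapA_ne (a : Fin q1) (b : Fin q0) :
    insert (Fin.natAdd q1 b) ((Bset q1 q0).erase (Fin.castAdd q0 a)) ≠ Bset q1 q0 := by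
  intro h
  exact kb_not_mem b (h ▸ Finset.mem_insert_self _ _)

lemma exists_ne_one_permSet (hq1 : 0 < q1) (hq0 : 0 < q0) :
    ∃ g ∈ permSet q1 q0, g ≠ 1 := by
  obtain ⟨g, hg, hgA⟩ := exists_perm_of_card (swapA_card ⟨0, hq1⟩ ⟨0, hq0⟩)
  refine ⟨g, hg, fun hcontra => ?_⟩
  apply swapA_ne (q1 := q1) (q0 := q0) ⟨0, hq1⟩ ⟨0, hq0⟩
  rw [← hgA, hcontra]
  simp

lemma two_le_card_permSet (hq1 : 0 < q1) (hq0 : 0 < q0) : 2 ≤ (permSet q1 q0).card := by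
  obtain ⟨g, hg, hgne⟩ := exists_ne_one_permSet hq1 hq0
  exact Finset.one_lt_card.mpr ⟨g, hg, 1, one_mem_permSet, hgne⟩

/-- Without separation (and with injective data) some permutation strictly
increases the statistic. -/
lemma exists_Tstat_gt (hq1 : 0 < q1) (hq0 : 0 < q0) (x : Fin (q1 + q0) → ℝ)
    (hinj : Function.Injective x)
    (hnsep : ¬ bmax q1 q0 hq0 x < bmin q1 q0 hq1 x) :
    ∃ g ∈ permSet q1 q0, g ≠ 1 ∧ Tstat q1 q0 x < Tstat q1 q0 (fun k => x (g k)) := by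
  push_neg at hnsep
  obtain ⟨a, -, ha⟩ := Finset.exists_mem_eq_inf'
    (⟨(⟨0, hq1⟩ : Fin q1), Finset.mem_univ _⟩ : (Finset.univ : Finset (Fin q1)).Nonempty)
    (fun i : Fin q1 => x (Fin.castAdd q0 i))
  obtain ⟨b, -, hb⟩ := Finset.exists_mem_eq_sup'
    (⟨(⟨0, hq0⟩ : Fin q0), Finset.mem_univ _⟩ : (Finset.univ : Finset (Fin q0)).Nonempty)
    (fun i : Fin q0 => x (Fin.natAdd q1 i))
  have hle : x (Fin.castAdd q0 a) ≤ x (Fin.natAdd q1 b) := by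
    rw [← ha, ← hb]; exact hnsep
  have hne : Fin.castAdd q0 a ≠ Fin.natAdd q1 b := by
    intro h
    have := congrArg Fin.val h
    simp at this
    omega
  have hlt : x (Fin.castAdd q0 a) < x (Fin.natAdd q1 b) :=
    lt_of_le_of_ne hle fun h => hne (hinj h)
  obtain ⟨g, hg, hgA⟩ := exists_perm_of_card (swapA_card a b)
  refine ⟨g, hg, fun hcontra => ?_, ?_⟩
  · apply swapA_ne a b
    rw [← hgA, hcontra]
    simp
  · rw [Tstat_perm, Tstat_eq_Tf, hgA]
    apply Tf_lt_Tf hq1 hq0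
    have h1 : Fin.natAdd q1 b ∉ (Bset q1 q0).erase (Fin.castAdd q0 a) := fun h =>
      kb_not_mem b (Finset.mem_of_mem_erase h)
    rw [Finset.sum_insert h1]
    have h2 : x (Fin.castAdd q0 a) + ∑ k ∈ (Bset q1 q0).erase (Fin.castAdd q0 a), x k
        = ∑ k ∈ Bset q1 q0, x k := Finset.add_sum_erase _ _ (ka_mem a)
    linarith

/- ### Sorted-list counting lemmas -/

lemma countP_ge_of_sorted {l : List ℝ} (hs : l.Pairwise (· ≤ ·)) {t : ℝ} {i : ℕ}
    (hi : i < l.length) (ht : t ≤ l.get ⟨i, hi⟩) :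
    l.length - i ≤ l.countP (fun a => decide (t ≤ a)) := by
  have hall : ∀ a ∈ l.drop i, t ≤ a := by
    have hdrop : l.drop i = l.get ⟨i, hi⟩ :: l.drop (i + 1) := by
      rw [List.drop_eq_getElem_cons hi]
      rfl
    have hsort : (l.drop i).Pairwise (· ≤ ·) := hs.sublist (List.drop_sublist i l)
    rw [hdrop] at hsort ⊢
    intro a ha
    rcases List.mem_cons.mp ha with rfl | ha
    · exact ht
    · exact le_trans ht ((List.pairwise_cons.mp hsort).1 a ha)
  have hcnt : (l.drop i).countP (fun a => decide (t ≤ a)) = (l.drop i).length :=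
    List.countP_eq_length.mpr fun a ha => decide_eq_true (hall a ha)
  calc l.length - i = (l.drop i).length := List.length_drop.symm
    _ = (l.drop i).countP (fun a => decide (t ≤ a)) := hcnt.symm
    _ ≤ l.countP (fun a => decide (t ≤ a)) := by
        conv_rhs => rw [← List.take_append_drop i l]
        rw [List.countP_append]
        omega

lemma countP_le_of_sorted {l : List ℝ} (hs : l.Pairwise (· ≤ ·)) {t : ℝ} {i : ℕ}
    (hi : i < l.length) (ht : l.get ⟨i, hi⟩ < t) :
    l.countP (fun a => decide (t ≤ a)) ≤ l.length - (i + 1) := by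
  have hsplit : l.countP (fun a => decide (t ≤ a))
      = (l.take (i + 1)).countP (fun a => decide (t ≤ a))
        + (l.drop (i + 1)).countP (fun a => decide (t ≤ a)) := by
    conv_lhs => rw [← List.take_append_drop (i + 1) l]
    rw [List.countP_append]
  have htake : (l.take (i + 1)).countP (fun a => decide (t ≤ a)) = 0 := by
    refine List.countP_eq_zero.mpr fun a ha => ?_
    obtain ⟨⟨j, hj⟩, rfl⟩ := List.mem_iff_get.mp ha
    have hj' : j < i + 1 := lt_of_lt_of_le hj (by simpa using List.length_take_le (i+1) l)
    have hjl : j < l.length := lt_of_lt_of_le hj (by simp)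
    have hget : (l.take (i + 1)).get ⟨j, hj⟩ = l.get ⟨j, hjl⟩ := by
      simp [List.get_eq_getElem, List.getElem_take]
    rw [hget]
    have hle : l.get ⟨j, hjl⟩ ≤ l.get ⟨i, hi⟩ :=
      hs.rel_get_of_le (by simp [Fin.le_def]; omega)
    simp only [decide_eq_true_eq]
    push_neg
    exact lt_of_le_of_lt hle ht
  have hdrop : (l.drop (i + 1)).countP (fun a => decide (t ≤ a)) ≤ l.length - (i + 1) := by
    calc (l.drop (i + 1)).countP (fun a => decide (t ≤ a)) ≤ (l.drop (i + 1)).length :=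
          List.countP_le_length
      _ = l.length - (i + 1) := List.length_drop
  omega
theorem det_iff (hq1 : 0 < q1) (hq0 : 0 < q0) (x : Fin (q1 + q0) → ℝ)
    (hinj : Function.Injective x) :
    Tstat q1 q0 x > ordStat q1 q0 x ((permSet q1 q0).card - 1) ↔
      bmax q1 q0 hq0 x < bmin q1 q0 hq1 x := by
  set t := Tstat q1 q0 x with ht
  set l := permVals q1 q0 x with hl
  have hsort : l.Pairwise (· ≤ ·) := Multiset.pairwise_sort _ _
  have hlen : l.length = (permSet q1 q0).card := by
    rw [hl]
    unfold permVals
    rw [Multiset.length_sort, Multiset.card_map]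
    rfl
  have hcount : l.countP (fun a => decide (t ≤ a))
      = ((permSet q1 q0).filter fun g => t ≤ Tstat q1 q0 fun k => x (g k)).card := by
    rw [hl]
    unfold permVals
    rw [← Multiset.coe_countP, Multiset.sort_eq, Multiset.countP_map]
    rfl
  have hord : ordStat q1 q0 x ((permSet q1 q0).card - 1) = l.getD (l.length - 2) 0 := by
    have hidx : (permSet q1 q0).card - 1 - 1 = l.length - 2 := by omega
    rw [ordStat, hidx, ← hl]
  constructor
  · intro hgt
    by_contra hnsep
    obtain ⟨g, hg, hgne, hlt⟩ := exists_Tstat_gt hq1 hq0 x hinj hnsep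
    have h2 : 2 ≤ ((permSet q1 q0).filter fun g => t ≤ Tstat q1 q0 fun k => x (g k)).card := by
      refine Finset.one_lt_card.mpr ⟨g, ?_, 1, ?_, hgne⟩
      · exact Finset.mem_filter.mpr ⟨hg, le_of_lt hlt⟩
      · exact Finset.mem_filter.mpr ⟨one_mem_permSet, le_of_eq rfl⟩
    have hcnt2 : 2 ≤ l.countP (fun a => decide (t ≤ a)) := hcount ▸ h2
    have hlen2 : 2 ≤ l.length := le_trans hcnt2 List.countP_le_length
    have hi : l.length - 2 < l.length := by omega
    have hget : t ≤ l.get ⟨l.length - 2, hi⟩ := by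
      by_contra hcon
      push_neg at hcon
      have := countP_le_of_sorted hsort hi hcon
      omega
    rw [hord, List.getD_eq_get l 0 ⟨l.length - 2, hi⟩] at hgt
    exact absurd hgt (not_lt.mpr hget)
  · intro hsep
    have hcnt1 : l.countP (fun a => decide (t ≤ a)) ≤ 1 := by
      rw [hcount]
      refine le_trans (Finset.card_le_card (fun g hgf => ?_))
        (le_of_eq (Finset.card_singleton (1 : Equiv.Perm (Fin (q1 + q0)))))
      obtain ⟨hg, hge⟩ := Finset.mem_filter.mp hgf
      rw [Finset.mem_singleton]
      by_contra hgne
      exact absurd hge (not_le.mpr (Tstat_lt_of_sep hq1 hq0 x hsep hg hgne))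
    have hlen2 : 2 ≤ l.length := hlen ▸ two_le_card_permSet hq1 hq0
    have hi : l.length - 2 < l.length := by omega
    have hget : l.get ⟨l.length - 2, hi⟩ < t := by
      by_contra hcon
      push_neg at hcon
      have := countP_ge_of_sorted hsort hi hcon
      omega
    rw [hord, List.getD_eq_get l 0 ⟨l.length - 2, hi⟩]
    exact hget

end SLEaux

open MeasureTheory ProbabilityTheory Finset

/-- a.s., `T(X) > T^{(|𝔊|−1)}(X,𝔊)` iff
`min{X_1,…,X_{q_1}} > max{X_{q_1+1},…,X_q}`. -/
theorem second_largest_exceedance_iff_separation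
    {Ω : Type*} [MeasurableSpace Ω] (P : Measure Ω) [IsProbabilityMeasure P]
    (q1 q0 : ℕ) (hq1 : 0 < q1) (hq0 : 0 < q0)
    (X : Fin (q1 + q0) → Ω → ℝ) (hXm : ∀ k, Measurable (X k))
    (hind : iIndepFun X P)
    (hcont : ∀ k (c : ℝ), P {ω | X k ω = c} = 0) :
    P {ω |
        (Tstat q1 q0 (fun k => X k ω)
            > ordStat q1 q0 (fun k => X k ω) ((permSet q1 q0).card - 1))
          ↔ (bmax q1 q0 hq0 (fun k => X k ω) < bmin q1 q0 hq1 (fun k => X k ω))} = 1 := by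
  classical
  have hnull : ∀ i j : Fin (q1 + q0), i ≠ j → P {ω | X i ω = X j ω} = 0 := by
    intro i j hij
    have hIF : IndepFun (X i) (X j) P := hind.indepFun hij
    have hmap : P.map (fun ω => (X i ω, X j ω)) = (P.map (X i)).prod (P.map (X j)) :=
      (indepFun_iff_map_prod_eq_prod_map_map (hXm i).aemeasurable (hXm j).aemeasurable).mp hIF
    haveI : IsProbabilityMeasure (P.map (X j)) :=
      Measure.isProbabilityMeasure_map (hXm j).aemeasurable
    haveI : IsProbabilityMeasure (P.map (X i)) :=
      Measure.isProbabilityMeasure_map (hXm i).aemeasurable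
    have hdiag : MeasurableSet {p : ℝ × ℝ | p.1 = p.2} :=
      measurableSet_eq_fun measurable_fst measurable_snd
    have hset : {ω | X i ω = X j ω}
        = (fun ω => (X i ω, X j ω)) ⁻¹' {p : ℝ × ℝ | p.1 = p.2} := rfl
    rw [hset, ← Measure.map_apply ((hXm i).prodMk (hXm j)) hdiag, hmap,
      Measure.prod_apply hdiag]
    have hz : ∀ a : ℝ, (P.map (X j)) (Prod.mk a ⁻¹' {p : ℝ × ℝ | p.1 = p.2}) = 0 := by
      intro a
      have hpre : Prod.mk a ⁻¹' {p : ℝ × ℝ | p.1 = p.2} = {a} := by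
        ext b; simp [eq_comm]
      rw [hpre, Measure.map_apply (hXm j) (measurableSet_singleton a)]
      exact hcont j a
    calc ∫⁻ a, (P.map (X j)) (Prod.mk a ⁻¹' {p : ℝ × ℝ | p.1 = p.2}) ∂(P.map (X i))
        = ∫⁻ _, 0 ∂(P.map (X i)) := lintegral_congr hz
      _ = 0 := lintegral_zero
  set S : Set Ω := {ω |
      (Tstat q1 q0 (fun k => X k ω)
          > ordStat q1 q0 (fun k => X k ω) ((permSet q1 q0).card - 1))
        ↔ (bmax q1 q0 hq0 (fun k => X k ω) < bmin q1 q0 hq1 (fun k => X k ω))} with hS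
  have hsub : Sᶜ ⊆ ⋃ i, ⋃ j, ⋃ (_ : i ≠ j), {ω | X i ω = X j ω} := by
    intro ω hω
    by_contra hmem
    apply hω
    have hinj : Function.Injective fun k => X k ω := by
      intro a b hab
      by_contra hne
      apply hmem
      simp only [Set.mem_iUnion]
      exact ⟨a, b, hne, hab⟩
    exact det_iff hq1 hq0 _ hinj
  have hN : P (⋃ i, ⋃ j, ⋃ (_ : i ≠ j), {ω | X i ω = X j ω}) = 0 :=
    measure_iUnion_null fun i => measure_iUnion_null fun j =>
      measure_iUnion_null fun hij => hnull i j hij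
  have h0 : P Sᶜ = 0 := measure_mono_null hsub hN
  have hle : 1 ≤ P S := by
    calc (1 : ℝ≥0∞) = P (S ∪ Sᶜ) := by rw [Set.union_compl_self]; exact measure_univ.symm
      _ ≤ P S + P Sᶜ := measure_union_le _ _
      _ = P S := by rw [h0, add_zero]
  exact le_antisymm prob_le_one hle
end

section
/- Let X_1,...,X_q be independent random variables with X_k ~ N(μ, σ_k²), q = q_1 + q_0 with q_1, q_0 ≥ 1. Then for all μ ∈ ℝ and all σ_1,...,σ_q > 0, P(min{X_1,...,X_{q_1}} > max{X_{q_1+1},...,X_q}) ≤ 2^{−(q_1 ∧ q_0)} + 2^{−((q_1 ∨ q_0)+1)} − 2^{−(q_1+q_0)}. -/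
open MeasureTheory ProbabilityTheory Finset Filter
open scoped NNReal ENNReal

open MeasureTheory ProbabilityTheory Finset
open scoped NNReal

section SepHelpers

open MeasureTheory ProbabilityTheory Finset
open scoped NNReal ENNReal

lemma gauss_refl (μ : ℝ) (v : ℝ≥0) :
    Measure.map (fun x => 2*μ - x) (gaussianReal μ v) = gaussianReal μ v := by
  have h1 : Measure.map (fun x : ℝ => (-1 : ℝ) * x) (gaussianReal μ v)
      = gaussianReal (-μ) v := by
    rw [show (fun x : ℝ => (-1:ℝ) * x) = ((-1 : ℝ) * ·) from rfl, gaussianReal_map_const_mul]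
    congr 1
    · ring
    · ext; simp
  have h2 : (fun x : ℝ => 2*μ - x) = (fun x : ℝ => x + 2*μ) ∘ (fun x : ℝ => (-1:ℝ)*x) := by
    funext x; simp; ring
  rw [h2, ← Measure.map_map (by fun_prop) (by fun_prop), h1,
    show (fun x : ℝ => x + 2*μ) = (· + (2*μ)) from rfl, gaussianReal_map_add_const]
  congr 1; ring

lemma gauss_atom (μ a : ℝ) {v : ℝ≥0} (hv : v ≠ 0) : gaussianReal μ v {a} = 0 :=
  gaussianReal_absolutelyContinuous μ hv (measure_singleton a)

lemma gauss_Ioi (μ : ℝ) {v : ℝ≥0} (hv : v ≠ 0) : gaussianReal μ v (Set.Ioi μ) = 2⁻¹ := by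
  have hmap := gauss_refl μ v
  have hsw : gaussianReal μ v (Set.Iio μ) = gaussianReal μ v (Set.Ioi μ) := by
    conv_lhs => rw [← hmap]
    rw [Measure.map_apply (by fun_prop) measurableSet_Iio]
    congr 1
    ext x; simp only [Set.mem_preimage, Set.mem_Iio, Set.mem_Ioi]
    constructor <;> intro <;> linarith
  have hu : (Set.Iio μ) ∪ {μ} ∪ Set.Ioi μ = Set.univ := by
    ext x; simp only [Set.mem_union, Set.mem_Iio, Set.mem_singleton_iff, Set.mem_Ioi,
      Set.mem_univ, iff_true]
    rcases lt_trichotomy x μ with h|h|h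
    · exact Or.inl (Or.inl h)
    · exact Or.inl (Or.inr h)
    · exact Or.inr h
  have h1 : gaussianReal μ v (Set.Iio μ ∪ {μ} ∪ Set.Ioi μ) = 1 := by rw [hu]; simp
  rw [measure_union (by
      simp only [Set.disjoint_left, Set.mem_union, Set.mem_Iio, Set.mem_singleton_iff,
        Set.mem_Ioi]
      rintro x (h|h) h' <;> linarith) measurableSet_Ioi,
    measure_union (by
      simp only [Set.disjoint_left, Set.mem_Iio, Set.mem_singleton_iff]
      intro a h h'
      exact absurd h' (ne_of_lt h)) (measurableSet_singleton μ),
    gauss_atom μ μ hv, add_zero, hsw] at h1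
  have h2 : (2:ℝ≥0∞) * gaussianReal μ v (Set.Ioi μ) = 1 := by rw [two_mul]; exact h1
  calc gaussianReal μ v (Set.Ioi μ)
      = 2⁻¹ * (2 * gaussianReal μ v (Set.Ioi μ)) := by
        rw [← mul_assoc, ENNReal.inv_mul_cancel (by norm_num) (by norm_num), one_mul]
    _ = 2⁻¹ := by rw [h2, mul_one]

lemma gauss_Iic (μ : ℝ) {v : ℝ≥0} (hv : v ≠ 0) : gaussianReal μ v (Set.Iic μ) = 2⁻¹ := by
  have := gauss_Ioi μ hv
  have hu : Set.Iic μ ∪ Set.Ioi μ = Set.univ := Set.Iic_union_Ioi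
  have h1 : gaussianReal μ v (Set.Iic μ ∪ Set.Ioi μ) = 1 := by rw [hu]; simp
  rw [measure_union (by
      simp only [Set.disjoint_left, Set.mem_Iic, Set.mem_Ioi]
      intro a h h'; exact absurd h' (not_lt.mpr h)) measurableSet_Ioi, this] at h1
  have h2 := ENNReal.eq_sub_of_add_eq (by norm_num) h1
  rw [h2]
  rw [show (1:ℝ≥0∞) = 2⁻¹ + 2⁻¹ from ENNReal.inv_two_add_inv_two.symm]
  rw [ENNReal.add_sub_cancel_right (by norm_num)]

lemma gauss_Ici (μ : ℝ) {v : ℝ≥0} (hv : v ≠ 0) : gaussianReal μ v (Set.Ici μ) = 2⁻¹ := by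
  have h : Set.Ici μ = {μ} ∪ Set.Ioi μ := by
    ext x; simp only [Set.mem_Ici, Set.mem_union, Set.mem_singleton_iff, Set.mem_Ioi]
    constructor
    · intro h; rcases eq_or_lt_of_le h with h'|h'; exacts [Or.inl h'.symm, Or.inr h']
    · rintro (h|h)
      · exact h.ge
      · exact h.le
  rw [h, measure_union (by simp [Set.disjoint_left]) measurableSet_Ioi, gauss_atom μ μ hv,
    zero_add, gauss_Ioi μ hv]

lemma pair_bound (μ : ℝ) (v1 v2 : ℝ≥0) (h1 : v1 ≠ 0) (h2 : v2 ≠ 0) :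
    (gaussianReal μ v1).prod (gaussianReal μ v2) {z : ℝ × ℝ | μ < z.2 ∧ z.2 < z.1}
      + (gaussianReal μ v1).prod (gaussianReal μ v2) {z : ℝ × ℝ | z.2 < z.1 ∧ z.1 ≤ μ}
      ≤ 4⁻¹ := by
  set π := (gaussianReal μ v1).prod (gaussianReal μ v2) with hπ
  have hRm : Measurable (Prod.map (fun x : ℝ => 2*μ - x) (fun x : ℝ => 2*μ - x)) := by
    fun_prop
  have hR : MeasurePreserving
      (Prod.map (fun x : ℝ => 2*μ - x) (fun x : ℝ => 2*μ - x)) π π := by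
    exact MeasurePreserving.prod ⟨by fun_prop, gauss_refl μ v1⟩ ⟨by fun_prop, gauss_refl μ v2⟩
  have hBm : MeasurableSet {z : ℝ × ℝ | z.2 < z.1 ∧ z.1 ≤ μ} := by
    apply MeasurableSet.inter
    · exact measurableSet_lt measurable_snd measurable_fst
    · exact measurableSet_le measurable_fst measurable_const
  have hr : π {z : ℝ × ℝ | z.2 < z.1 ∧ z.1 ≤ μ} = π {z : ℝ × ℝ | z.1 < z.2 ∧ μ ≤ z.1} := by
    conv_lhs => rw [← hR.measure_preimage hBm.nullMeasurableSet]
    congr 1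
    ext z
    simp only [Set.mem_preimage, Prod.map, Set.mem_setOf_eq]
    constructor
    · rintro ⟨a, b⟩; constructor <;> linarith
    · rintro ⟨a, b⟩; constructor <;> linarith
  rw [hr]
  have hAm : MeasurableSet {z : ℝ × ℝ | μ < z.2 ∧ z.2 < z.1} := by
    apply MeasurableSet.inter
    · exact measurableSet_lt measurable_const measurable_snd
    · exact measurableSet_lt measurable_snd measurable_fst
  have hdisj : Disjoint {z : ℝ × ℝ | μ < z.2 ∧ z.2 < z.1}
      {z : ℝ × ℝ | z.1 < z.2 ∧ μ ≤ z.1} := by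
    simp only [Set.disjoint_left, Set.mem_setOf_eq]
    rintro z ⟨a, b⟩ ⟨c, d⟩; linarith
  rw [← measure_union hdisj (by
    apply MeasurableSet.inter
    · exact measurableSet_lt measurable_fst measurable_snd
    · exact measurableSet_le measurable_const measurable_fst)]
  have hsub : {z : ℝ × ℝ | μ < z.2 ∧ z.2 < z.1} ∪ {z : ℝ × ℝ | z.1 < z.2 ∧ μ ≤ z.1}
      ⊆ Set.Ici μ ×ˢ Set.Ioi μ := by
    rintro z (⟨a, b⟩|⟨a, b⟩) <;>
      refine ⟨by simp only [Set.mem_Ici]; linarith, by simp only [Set.mem_Ioi]; linarith⟩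
  calc π _ ≤ π (Set.Ici μ ×ˢ Set.Ioi μ) := measure_mono hsub
    _ = 2⁻¹ * 2⁻¹ := by rw [hπ, Measure.prod_prod, gauss_Ici μ h1, gauss_Ioi μ h2]
    _ = 4⁻¹ := by
        rw [← ENNReal.mul_inv (Or.inl (by norm_num)) (Or.inl (by norm_num))]
        norm_num

lemma count_fixed {n : ℕ} (A : Finset (Fin n)) (b : Fin n → Bool) :
    ((Finset.univ : Finset (Fin n → Bool)).filter (fun s => ∀ k ∈ A, s k = b k)).card
      = 2 ^ (n - A.card) := by
  classical
  rw [← Fintype.card_subtype]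
  have e : {s : Fin n → Bool // ∀ k ∈ A, s k = b k} ≃ (((Aᶜ : Finset (Fin n)) : Type) → Bool) :=
    { toFun := fun s k => s.1 k.1
      invFun := fun g => ⟨fun k => if h : k ∈ A then b k else g ⟨k, by simp [h]⟩,
        fun k hk => by simp [hk]⟩
      left_inv := fun s => by
        ext k
        by_cases h : k ∈ A
        · simp [h, s.2 k h]
        · simp [h]
      right_inv := fun g => by
        funext k
        have : (k : Fin n) ∉ A := Finset.mem_compl.mp k.2
        simp [this] }
  rw [Fintype.card_congr e, Fintype.card_fun]
  rw [Fintype.card_coe, Finset.card_compl, Fintype.card_fin, Fintype.card_bool]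

lemma card_filter_lt (a b : ℕ) :
    ((Finset.univ : Finset (Fin (a + b))).filter (fun k : Fin (a + b) => (k : ℕ) < a)).card = a := by
  have h : (Finset.univ : Finset (Fin (a + b))).filter (fun k : Fin (a + b) => (k : ℕ) < a)
      = Finset.image (Fin.castAdd b) Finset.univ := by
    ext k
    simp only [Finset.mem_filter, Finset.mem_univ, true_and, Finset.mem_image]
    constructor
    · intro h
      exact ⟨⟨(k : ℕ), h⟩, by ext; simp⟩
    · rintro ⟨i, rfl⟩
      simp
  rw [h, Finset.card_image_of_injective _ (fun x y hxy => by
    ext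
    simpa using congrArg Fin.val hxy), Finset.card_univ, Fintype.card_fin]

lemma card_filter_le (a b : ℕ) :
    ((Finset.univ : Finset (Fin (a + b))).filter (fun k : Fin (a + b) => a ≤ (k : ℕ))).card = b := by
  classical
  have h := Finset.card_filter_add_card_filter_not
    (s := (Finset.univ : Finset (Fin (a + b)))) (p := fun k : Fin (a + b) => (k : ℕ) < a)
  rw [card_filter_lt a b, Finset.card_univ, Fintype.card_fin] at h
  have h2 : (Finset.univ : Finset (Fin (a + b))).filter (fun k : Fin (a + b) => ¬ (k : ℕ) < a)
      = (Finset.univ : Finset (Fin (a + b))).filter (fun k : Fin (a + b) => a ≤ (k : ℕ)) := by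
    apply Finset.filter_congr
    intro k _
    simp [not_lt]
  rw [h2] at h
  omega

lemma ofReal_half_pow (m : ℕ) : ENNReal.ofReal ((1/2 : ℝ) ^ m) = (2⁻¹ : ℝ≥0∞) ^ m := by
  rw [ENNReal.ofReal_pow (by norm_num)]
  congr 1
  rw [one_div, ENNReal.ofReal_inv_of_pos (by norm_num)]
  norm_num

lemma two_pow_cancel (m : ℕ) : (2 : ℝ≥0∞) ^ m * 2⁻¹ ^ m = 1 := by
  rw [← mul_pow, ENNReal.mul_inv_cancel (by norm_num) (by norm_num), one_pow]

lemma quarter_eq : (4⁻¹ : ℝ≥0∞) = 2⁻¹ ^ 2 := by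
  rw [pow_two, ← ENNReal.mul_inv (Or.inl (by norm_num)) (Or.inl (by norm_num))]
  norm_num

lemma half_pow_le {m k : ℕ} (h : k ≤ m) : (2⁻¹ : ℝ≥0∞) ^ m ≤ 2⁻¹ ^ k := by
  have : (2⁻¹ : ℝ≥0∞) ^ m = 2⁻¹ ^ k * 2⁻¹ ^ (m - k) := by
    rw [← pow_add]
    congr 1
    omega
  rw [this]
  calc (2⁻¹ : ℝ≥0∞) ^ k * 2⁻¹ ^ (m - k) ≤ 2⁻¹ ^ k * 1 := by
        gcongr
        exact pow_le_one' (by norm_num) _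
    _ = 2⁻¹ ^ k := mul_one _

end SepHelpers

/-- worst-case bound on P(min of treated > max of controls) for
independent normals with common mean and arbitrary positive variances. -/
theorem separation_prob_bound
    {Ω : Type*} [MeasurableSpace Ω] (P : Measure Ω) [IsProbabilityMeasure P]
    (q1 q0 : ℕ) (hq1 : 0 < q1) (hq0 : 0 < q0)
    (μ : ℝ) (σ : Fin (q1 + q0) → ℝ≥0) (hσ : ∀ k, 0 < σ k)
    (X : Fin (q1 + q0) → Ω → ℝ) (hXm : ∀ k, Measurable (X k))
    (hind : iIndepFun X P)
    (hdist : ∀ k, Measure.map (X k) P = gaussianReal μ (σ k ^ 2)) :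
    P {ω | bmax q1 q0 hq0 (fun k => X k ω) < bmin q1 q0 hq1 (fun k => X k ω)}
      ≤ ENNReal.ofReal
          ((1 / 2 : ℝ) ^ (min q1 q0) + (1 / 2 : ℝ) ^ (max q1 q0 + 1)
            - (1 / 2 : ℝ) ^ (q1 + q0)) := by
  classical
  -- index constants
  have hi0lt : 0 < q1 + q0 := by omega
  have hj0lt : q1 < q1 + q0 := by omega
  set i0 : Fin (q1 + q0) := ⟨0, hi0lt⟩ with hi0
  set j0 : Fin (q1 + q0) := ⟨q1, hj0lt⟩ with hj0
  have hne : i0 ≠ j0 := by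
    simp only [hi0, hj0, ne_eq, Fin.mk.injEq]
    omega
  -- the event, rephrased
  set E : Set Ω := {ω | bmax q1 q0 hq0 (fun k => X k ω) < bmin q1 q0 hq1 (fun k => X k ω)}
    with hE
  have hEalt : ∀ ω, ω ∈ E ↔
      ∀ k k' : Fin (q1 + q0), q1 ≤ (k : ℕ) → (k' : ℕ) < q1 → X k ω < X k' ω := by
    intro ω
    rw [hE]
    simp only [Set.mem_setOf_eq, bmax, bmin]
    refine (Finset.sup'_lt_iff _).trans ?_
    constructor
    · intro h k k' hk hk'
      have h2 := (Finset.lt_inf'_iff _).1 (h ⟨(k : ℕ) - q1, by omega⟩ (Finset.mem_univ _))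
        ⟨(k' : ℕ), hk'⟩ (Finset.mem_univ _)
      have e1 : Fin.natAdd q1 (⟨(k : ℕ) - q1, by omega⟩ : Fin q0) = k := by
        ext
        simp only [Fin.coe_natAdd]
        omega
      have e2 : Fin.castAdd q0 (⟨(k' : ℕ), hk'⟩ : Fin q1) = k' := by
        ext
        simp [Fin.coe_castAdd]
      rwa [e1, e2] at h2
    · intro h j _
      refine (Finset.lt_inf'_iff _).2 ?_
      intro i _
      exact h (Fin.natAdd q1 j) (Fin.castAdd q0 i) (by simp) (by simp [Fin.coe_castAdd, i.2])
  have hEm : MeasurableSet E := by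
    have hrw : E = ⋂ (k : Fin (q1+q0)) (k' : Fin (q1+q0)),
        ⋂ (_ : q1 ≤ (k:ℕ)) (_ : (k':ℕ) < q1), {ω | X k ω < X k' ω} := by
      ext ω
      simp only [Set.mem_iInter, Set.mem_setOf_eq]
      exact hEalt ω
    rw [hrw]
    exact MeasurableSet.iInter fun k => MeasurableSet.iInter fun k' =>
      MeasurableSet.iInter fun _ => MeasurableSet.iInter fun _ =>
        measurableSet_lt (hXm k) (hXm k')
  -- sign sets
  set Bs : Bool → Set ℝ := fun b => if b then Set.Ioi μ else Set.Iic μ with hBs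
  have hBsm : ∀ b, MeasurableSet (Bs b) := by
    intro b
    cases b
    · exact measurableSet_Iic
    · exact measurableSet_Ioi
  set Es : (Fin (q1 + q0) → Bool) → Set Ω := fun s => ⋂ k, X k ⁻¹' Bs (s k) with hEsdef
  have hBsT : Bs true = Set.Ioi μ := by rw [hBs]; simp
  have hBsF : Bs false = Set.Iic μ := by rw [hBs]; simp
  have hEsm : ∀ s, MeasurableSet (Es s) :=
    fun s => MeasurableSet.iInter fun k => (hXm k) (hBsm _)
  have hEsmem : ∀ s ω, ω ∈ Es s ↔ ∀ k, X k ω ∈ Bs (s k) := by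
    intro s ω
    simp only [hEsdef, Set.mem_iInter, Set.mem_preimage]
  -- partition
  have hcover : E = ⋃ s : Fin (q1 + q0) → Bool, (E ∩ Es s) := by
    ext ω
    simp only [Set.mem_iUnion, Set.mem_inter_iff]
    constructor
    · intro h
      refine ⟨fun k => decide (μ < X k ω), h, ?_⟩
      rw [hEsmem]
      intro k
      by_cases hk : μ < X k ω
      · have hd : decide (μ < X k ω) = true := by simpa using hk
        rw [hd, hBsT]
        exact hk
      · have hd : decide (μ < X k ω) = false := by simpa using hk
        rw [hd, hBsF]
        exact le_of_not_gt hk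
    · rintro ⟨s, h, _⟩
      exact h
  have hdisj : Pairwise (Function.onFun Disjoint fun s => E ∩ Es s) := by
    intro s t hst
    simp only [Function.onFun, Set.disjoint_left, Set.mem_inter_iff]
    rintro ω ⟨-, hs⟩ ⟨-, ht⟩
    rw [hEsmem] at hs ht
    apply hst
    funext k
    have h1 := hs k
    have h2 := ht k
    cases hsk : s k <;> cases htk : t k
    · rfl
    · rw [hsk, hBsF] at h1; rw [htk, hBsT] at h2
      rw [Set.mem_Iic] at h1; rw [Set.mem_Ioi] at h2
      linarith
    · rw [hsk, hBsT] at h1; rw [htk, hBsF] at h2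
      rw [Set.mem_Ioi] at h1; rw [Set.mem_Iic] at h2
      linarith
    · rfl
  have hsum : P E = ∑ s : Fin (q1 + q0) → Bool, P (E ∩ Es s) := by
    conv_lhs => rw [hcover]
    rw [measure_iUnion hdisj (fun s => hEm.inter (hEsm s))]
    exact tsum_fintype _
  -- half measures
  have hv : ∀ k : Fin (q1+q0), (σ k ^ 2 : ℝ≥0) ≠ 0 := fun k => pow_ne_zero _ (hσ k).ne'
  have hhalf : ∀ (k : Fin (q1+q0)) (b : Bool), P (X k ⁻¹' Bs b) = 2⁻¹ := by
    intro k b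
    rw [← Measure.map_apply (hXm k) (hBsm b), hdist k]
    cases b
    · exact gauss_Iic μ (hv k)
    · exact gauss_Ioi μ (hv k)
  have hPEs : ∀ s, P (Es s) = 2⁻¹ ^ (q1 + q0) := by
    intro s
    rw [hEsdef]
    rw [hind.meas_iInter (fun k => ⟨Bs (s k), hBsm _, rfl⟩)]
    rw [Finset.prod_congr rfl (fun k _ => hhalf k (s k)), Finset.prod_const,
      Finset.card_univ, Fintype.card_fin]
  -- pair measure
  set pm : Measure (ℝ × ℝ) := (gaussianReal μ (σ i0 ^ 2)).prod (gaussianReal μ (σ j0 ^ 2))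
    with hpm
  have hpairlaw : Measure.map (fun ω => (X i0 ω, X j0 ω)) P = pm := by
    rw [hpm, ← hdist i0, ← hdist j0]
    exact (indepFun_iff_map_prod_eq_prod_map_map (hXm i0).aemeasurable
      (hXm j0).aemeasurable).1 (hind.indepFun hne)
  -- the complement finset
  set T : Finset (Fin (q1 + q0)) := Finset.univ \ {i0, j0} with hT
  have hTcard : T.card = q1 + q0 - 2 := by
    rw [hT, Finset.card_sdiff_of_subset (Finset.subset_univ _), Finset.card_univ, Fintype.card_fin]
    congr 1
    rw [Finset.card_insert_of_notMem (by simpa using hne), Finset.card_singleton]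
  have hRest : ∀ (s : Fin (q1 + q0) → Bool) (D : Set (ℝ × ℝ)), MeasurableSet D →
      P ({ω | (X i0 ω, X j0 ω) ∈ D} ∩ ⋂ k ∈ T, X k ⁻¹' Bs (s k))
        = pm D * 2⁻¹ ^ (q1 + q0 - 2) := by
    intro s D hD
    have hIF := hind.indepFun_finset ({i0, j0} : Finset (Fin (q1+q0))) T
      (by rw [hT]; exact Finset.disjoint_sdiff) hXm
    have hi0mem : i0 ∈ ({i0, j0} : Finset (Fin (q1+q0))) := by simp
    have hj0mem : j0 ∈ ({i0, j0} : Finset (Fin (q1+q0))) := by simp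
    set D' : Set (({i0, j0} : Finset (Fin (q1+q0))) → ℝ) :=
      {y | (y ⟨i0, hi0mem⟩, y ⟨j0, hj0mem⟩) ∈ D} with hD'
    have hD'm : MeasurableSet D' :=
      ((measurable_pi_apply _).prodMk (measurable_pi_apply _)) hD
    set B' : Set (↥T → ℝ) :=
      Set.univ.pi (fun k : ↥T => Bs (s k.1)) with hB'
    have hB'm : MeasurableSet B' := MeasurableSet.univ_pi (fun k => hBsm _)
    have he1 : {ω | (X i0 ω, X j0 ω) ∈ D}
        = (fun a (i : ({i0, j0} : Finset (Fin (q1+q0)))) => X i a) ⁻¹' D' := by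
      ext ω; simp [hD']
    have he2 : (⋂ k ∈ T, X k ⁻¹' Bs (s k))
        = (fun a (i : ↥T) => X i.1 a) ⁻¹' B' := by
      ext ω
      simp only [Set.mem_iInter, Set.mem_preimage, hB', Set.mem_pi, Set.mem_univ,
        forall_true_left]
      constructor
      · intro h k
        exact h k.1 k.2
      · intro h k hk
        exact h ⟨k, hk⟩
    rw [he1, he2, hIF.measure_inter_preimage_eq_mul _ _ hD'm hB'm]
    congr 1
    · have hid : {ω | (X i0 ω, X j0 ω) ∈ D} = (fun ω => (X i0 ω, X j0 ω)) ⁻¹' D := rfl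
      rw [← he1, hid, ← Measure.map_apply ((hXm i0).prodMk (hXm j0)) hD, hpairlaw]
    · rw [← he2]
      rw [hind.meas_biInter (fun k _ => ⟨Bs (s k), hBsm _, rfl⟩)]
      rw [Finset.prod_congr rfl (fun k _ => hhalf k (s k)), Finset.prod_const, hTcard]
  -- pair sets
  set Dp : Set (ℝ × ℝ) := {z | μ < z.2 ∧ z.2 < z.1} with hDp
  set Dr : Set (ℝ × ℝ) := {z | z.2 < z.1 ∧ z.1 ≤ μ} with hDr
  have hDpm : MeasurableSet Dp :=
    (measurableSet_lt measurable_const measurable_snd).inter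
      (measurableSet_lt measurable_snd measurable_fst)
  have hDrm : MeasurableSet Dr :=
    (measurableSet_lt measurable_snd measurable_fst).inter
      (measurableSet_le measurable_fst measurable_const)
  have hpr : pm Dp + pm Dr ≤ 4⁻¹ := pair_bound μ _ _ (hv i0) (hv j0)
  -- predicates
  set FT : (Fin (q1 + q0) → Bool) → Prop :=
    fun s => ∀ k : Fin (q1 + q0), (k : ℕ) < q1 → s k = true with hFTdef
  set SF : (Fin (q1 + q0) → Bool) → Prop :=
    fun s => ∀ k : Fin (q1 + q0), q1 ≤ (k : ℕ) → s k = false with hSFdef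
  set c2 : ℝ≥0∞ := 2⁻¹ ^ (q1 + q0 - 2) with hc2
  set f : (Fin (q1 + q0) → Bool) → ℝ≥0∞ := fun s =>
    (if FT s ∧ s j0 = true then pm Dp * c2 else 0)
    + (if SF s ∧ s i0 = false then pm Dr * c2 else 0)
    + (if (FT s ∧ s j0 = false) ∨ (SF s ∧ s i0 = true) then 2⁻¹ ^ (q1 + q0) else 0)
    with hfdef
  have hq1j0 : q1 ≤ (j0 : ℕ) := by rw [hj0]
  have hi0q1 : (i0 : ℕ) < q1 := by rw [hi0]; exact hq1
  have hrestsub : ∀ s ω, ω ∈ Es s → ω ∈ ⋂ k ∈ T, X k ⁻¹' Bs (s k) := by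
    intro s ω hω
    rw [Set.mem_iInter₂]
    intro k _
    exact (hEsmem s ω).1 hω k
  have hpoint : ∀ s, P (E ∩ Es s) ≤ f s := by
    intro s
    by_cases hFT : FT s
    · by_cases hsj : s j0 = true
      · have hsub : E ∩ Es s ⊆ {ω | (X i0 ω, X j0 ω) ∈ Dp} ∩ ⋂ k ∈ T, X k ⁻¹' Bs (s k) := by
          rintro ω ⟨hEω, hEsω⟩
          refine ⟨⟨?_, ?_⟩, hrestsub s ω hEsω⟩
          · have h := (hEsmem s ω).1 hEsω j0
            rw [hsj, hBsT] at h
            exact h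
          · exact (hEalt ω).1 hEω j0 i0 hq1j0 hi0q1
        have h1 : P (E ∩ Es s) ≤ pm Dp * c2 :=
          le_trans (measure_mono hsub) (le_of_eq (hRest s Dp hDpm))
        refine h1.trans ?_
        rw [hfdef]
        simp only [if_pos (And.intro hFT hsj)]
        exact le_trans (self_le_add_right _ _) (self_le_add_right _ _)
      · rw [Bool.not_eq_true] at hsj
        have h1 : P (E ∩ Es s) ≤ 2⁻¹ ^ (q1 + q0) := by
          rw [← hPEs s]
          exact measure_mono Set.inter_subset_right
        refine h1.trans ?_
        rw [hfdef]
        simp only [if_pos (Or.inl (And.intro hFT hsj))]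
        exact le_add_self
    · by_cases hSF : SF s
      · by_cases hsi : s i0 = false
        · have hsub : E ∩ Es s ⊆ {ω | (X i0 ω, X j0 ω) ∈ Dr} ∩ ⋂ k ∈ T, X k ⁻¹' Bs (s k) := by
            rintro ω ⟨hEω, hEsω⟩
            refine ⟨⟨?_, ?_⟩, hrestsub s ω hEsω⟩
            · exact (hEalt ω).1 hEω j0 i0 hq1j0 hi0q1
            · have h := (hEsmem s ω).1 hEsω i0
              rw [hsi, hBsF] at h
              exact h
          have h1 : P (E ∩ Es s) ≤ pm Dr * c2 :=
            le_trans (measure_mono hsub) (le_of_eq (hRest s Dr hDrm))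
          refine h1.trans ?_
          rw [hfdef]
          simp only [if_pos (And.intro hSF hsi)]
          exact le_trans le_add_self (self_le_add_right _ _)
        · rw [Bool.not_eq_false] at hsi
          have h1 : P (E ∩ Es s) ≤ 2⁻¹ ^ (q1 + q0) := by
            rw [← hPEs s]
            exact measure_mono Set.inter_subset_right
          refine h1.trans ?_
          rw [hfdef]
          simp only [if_pos (Or.inr (And.intro hSF hsi))]
          exact le_add_self
      · have hempty : E ∩ Es s = ∅ := by
          rw [Set.eq_empty_iff_forall_notMem]
          rintro ω ⟨hEω, hEsω⟩
          rw [hFTdef] at hFT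
          rw [hSFdef] at hSF
          simp only [not_forall, Classical.not_imp] at hFT hSF
          obtain ⟨k', hk', hk'f⟩ := hFT
          obtain ⟨k, hk, hkt⟩ := hSF
          rw [Bool.not_eq_true] at hk'f
          rw [Bool.not_eq_false] at hkt
          have h1 : X k' ω ≤ μ := by
            have h := (hEsmem s ω).1 hEsω k'
            rw [hk'f, hBsF] at h
            exact h
          have h2 : μ < X k ω := by
            have h := (hEsmem s ω).1 hEsω k
            rw [hkt, hBsT] at h
            exact h
          have h3 := (hEalt ω).1 hEω k k' hk hk'
          linarith
        rw [hempty, measure_empty]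
        exact zero_le
  -- arithmetic preliminaries (omega in a clean context)
  have g1 : (q0 - 1) + (q1 - 1) = q1 + q0 - 2 := by omega
  have g2 : (q1 - 1) + (q0 - 1) = q1 + q0 - 2 := by omega
  have g3 : (q0 - 1) + (q1 + 1) = q1 + q0 := by omega
  have g4 : (q1 - 1) + (q0 + 1) = q1 + q0 := by omega
  have g5 : 2 + (q1 - 1) = q1 + 1 := by omega
  have g6 : 2 + (q0 - 1) = q0 + 1 := by omega
  have gq1 : q1 - 1 + 1 = q1 := by omega
  have gq0 : q0 - 1 + 1 = q0 := by omega
  -- counting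
  have e1 : q1 + q0 - (q1 + 1) = q0 - 1 := by omega
  have e2 : q1 + q0 - (q0 + 1) = q1 - 1 := by omega
  set Fb : Finset (Fin (q1 + q0)) :=
    Finset.univ.filter (fun k : Fin (q1 + q0) => (k : ℕ) < q1) with hFb
  set Sb : Finset (Fin (q1 + q0)) :=
    Finset.univ.filter (fun k : Fin (q1 + q0) => q1 ≤ (k : ℕ)) with hSb
  have hFbcard : Fb.card = q1 := card_filter_lt q1 q0
  have hSbcard : Sb.card = q0 := card_filter_le q1 q0
  have hj0Fb : j0 ∉ Fb := by simp [hFb, hj0]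
  have hi0Sb : i0 ∉ Sb := by simp [hSb, hi0]; omega
  set A1 : Finset (Fin (q1 + q0)) := insert j0 Fb with hA1
  set A2 : Finset (Fin (q1 + q0)) := insert i0 Sb with hA2
  have hA1card : A1.card = q1 + 1 := by
    rw [hA1, Finset.card_insert_of_notMem hj0Fb, hFbcard]
  have hA2card : A2.card = q0 + 1 := by
    rw [hA2, Finset.card_insert_of_notMem hi0Sb, hSbcard]
  have hmemFb : ∀ k : Fin (q1 + q0), k ∈ Fb ↔ (k : ℕ) < q1 := by
    intro k; simp [hFb]
  have hmemSb : ∀ k : Fin (q1 + q0), k ∈ Sb ↔ q1 ≤ (k : ℕ) := by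
    intro k; simp [hSb]
  -- N1
  have hN1 : ((Finset.univ : Finset (Fin (q1 + q0) → Bool)).filter
      (fun s => FT s ∧ s j0 = true)).card = 2 ^ (q0 - 1) := by
    have he : ∀ s : Fin (q1 + q0) → Bool,
        (FT s ∧ s j0 = true) ↔ ∀ k ∈ A1, s k = decide ((k : ℕ) ≤ q1) := by
      intro s
      constructor
      · rintro ⟨h1, h2⟩ k hk
        rcases Finset.mem_insert.1 hk with rfl | hk
        · rw [h2, eq_comm, decide_eq_true_eq, hj0]
        · rw [hFTdef] at h1
          have hklt := (hmemFb k).1 hk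
          rw [h1 k hklt, eq_comm, decide_eq_true_eq]
          omega
      · intro h
        constructor
        · rw [hFTdef]
          intro k hk
          rw [h k (Finset.mem_insert_of_mem ((hmemFb k).2 hk)), decide_eq_true_eq]
          omega
        · rw [h j0 (Finset.mem_insert_self _ _), decide_eq_true_eq, hj0]
    rw [Finset.filter_congr (fun s _ => he s), count_fixed A1 _, hA1card]
    congr 1
  -- N2
  have hN2 : ((Finset.univ : Finset (Fin (q1 + q0) → Bool)).filter
      (fun s => SF s ∧ s i0 = false)).card = 2 ^ (q1 - 1) := by
    have he : ∀ s : Fin (q1 + q0) → Bool,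
        (SF s ∧ s i0 = false) ↔ ∀ k ∈ A2, s k = false := by
      intro s
      constructor
      · rintro ⟨h1, h2⟩ k hk
        rcases Finset.mem_insert.1 hk with rfl | hk
        · exact h2
        · rw [hSFdef] at h1
          exact h1 k ((hmemSb k).1 hk)
      · intro h
        constructor
        · rw [hSFdef]
          intro k hk
          exact h k (Finset.mem_insert_of_mem ((hmemSb k).2 hk))
        · exact h i0 (Finset.mem_insert_self _ _)
    rw [Finset.filter_congr (fun s _ => he s), count_fixed A2 _, hA2card]
    congr 1
  -- N3
  set N3 : ℕ := ((Finset.univ : Finset (Fin (q1 + q0) → Bool)).filter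
      (fun s => (FT s ∧ s j0 = false) ∨ (SF s ∧ s i0 = true))).card with hN3def
  have hN3 : N3 + 1 = 2 ^ (q0 - 1) + 2 ^ (q1 - 1) := by
    clear hN1 hN2
    have hU : ((Finset.univ : Finset (Fin (q1 + q0) → Bool)).filter
        (fun s => FT s ∧ s j0 = false)).card = 2 ^ (q0 - 1) := by
      have he : ∀ s : Fin (q1 + q0) → Bool,
          (FT s ∧ s j0 = false) ↔ ∀ k ∈ A1, s k = decide ((k : ℕ) < q1) := by
        intro s
        constructor
        · rintro ⟨h1, h2⟩ k hk
          rcases Finset.mem_insert.1 hk with rfl | hk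
          · rw [h2, eq_comm, decide_eq_false_iff_not, hj0]
            exact lt_irrefl q1
          · rw [hFTdef] at h1
            have hklt := (hmemFb k).1 hk
            rw [h1 k hklt, eq_comm, decide_eq_true_eq]
            exact hklt
        · intro h
          constructor
          · rw [hFTdef]
            intro k hk
            rw [h k (Finset.mem_insert_of_mem ((hmemFb k).2 hk)), decide_eq_true_eq]
            exact hk
          · rw [h j0 (Finset.mem_insert_self _ _), hj0]
            simp
      rw [Finset.filter_congr (fun s _ => he s), count_fixed A1 _, hA1card]
      congr 1
    have hV : ((Finset.univ : Finset (Fin (q1 + q0) → Bool)).filter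
        (fun s => SF s ∧ s i0 = true)).card = 2 ^ (q1 - 1) := by
      have he : ∀ s : Fin (q1 + q0) → Bool,
          (SF s ∧ s i0 = true) ↔ ∀ k ∈ A2, s k = decide ((k : ℕ) < q1) := by
        intro s
        constructor
        · rintro ⟨h1, h2⟩ k hk
          rcases Finset.mem_insert.1 hk with rfl | hk
          · rw [h2, eq_comm, decide_eq_true_eq, hi0]
            exact hq1
          · rw [hSFdef] at h1
            have hkge := (hmemSb k).1 hk
            rw [h1 k hkge, eq_comm, decide_eq_false_iff_not]
            exact not_lt.2 hkge
        · intro h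
          constructor
          · rw [hSFdef]
            intro k hk
            rw [h k (Finset.mem_insert_of_mem ((hmemSb k).2 hk)), decide_eq_false_iff_not]
            exact not_lt.2 hk
          · rw [h i0 (Finset.mem_insert_self _ _), hi0]
            simp [hq1]
      rw [Finset.filter_congr (fun s _ => he s), count_fixed A2 _, hA2card]
      congr 1
    have hI : ((Finset.univ : Finset (Fin (q1 + q0) → Bool)).filter
        (fun s => (FT s ∧ s j0 = false) ∧ (SF s ∧ s i0 = true))).card = 1 := by
      have he : ∀ s : Fin (q1 + q0) → Bool,
          ((FT s ∧ s j0 = false) ∧ (SF s ∧ s i0 = true))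
            ↔ ∀ k ∈ (Finset.univ : Finset (Fin (q1 + q0))), s k = decide ((k : ℕ) < q1) := by
        intro s
        constructor
        · rintro ⟨⟨h1, -⟩, ⟨h2, -⟩⟩ k -
          rw [hFTdef] at h1
          rw [hSFdef] at h2
          by_cases hk : (k : ℕ) < q1
          · rw [h1 k hk, eq_comm, decide_eq_true_eq]
            exact hk
          · rw [h2 k (not_lt.1 hk), eq_comm, decide_eq_false_iff_not]
            exact hk
        · intro h
          refine ⟨⟨?_, ?_⟩, ?_, ?_⟩
          · rw [hFTdef]
            intro k hk
            rw [h k (Finset.mem_univ _), decide_eq_true_eq]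
            exact hk
          · rw [h j0 (Finset.mem_univ _), hj0]
            simp
          · rw [hSFdef]
            intro k hk
            rw [h k (Finset.mem_univ _), decide_eq_false_iff_not]
            exact not_lt.2 hk
          · rw [h i0 (Finset.mem_univ _), hi0]
            simp [hq1]
      rw [Finset.filter_congr (fun s _ => he s), count_fixed Finset.univ _,
        Finset.card_univ, Fintype.card_fin]
      simp
    have hcui := Finset.card_union_add_card_inter
      ((Finset.univ : Finset (Fin (q1 + q0) → Bool)).filter (fun s => FT s ∧ s j0 = false))
      ((Finset.univ : Finset (Fin (q1 + q0) → Bool)).filter (fun s => SF s ∧ s i0 = true))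
    rw [← Finset.filter_or, ← Finset.filter_and, hU, hV, hI, ← hN3def] at hcui
    exact hcui
  -- summing
  have hsumf : ∑ s : Fin (q1 + q0) → Bool, f s
      = (2 ^ (q0 - 1) : ℕ) * (pm Dp * c2) + (2 ^ (q1 - 1) : ℕ) * (pm Dr * c2)
        + (N3 : ℕ) * 2⁻¹ ^ (q1 + q0) := by
    rw [hfdef]
    rw [Finset.sum_add_distrib, Finset.sum_add_distrib]
    congr 1
    · congr 1
      · rw [← Finset.sum_filter, Finset.sum_const, hN1, nsmul_eq_mul]
      · rw [← Finset.sum_filter, Finset.sum_const, hN2, nsmul_eq_mul]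
    · rw [← Finset.sum_filter, Finset.sum_const, ← hN3def, nsmul_eq_mul]
  -- assembling
  have hcpow : ∀ a b c : ℕ, a + b = c → ((2 ^ a : ℕ) : ℝ≥0∞) * 2⁻¹ ^ c = 2⁻¹ ^ b := by
    intro a b c hc
    rw [← hc]
    push_cast
    rw [pow_add, ← mul_assoc, two_pow_cancel, one_mul]
  have hfinalsum : P E ≤ ((2 ^ (q0 - 1) : ℕ) : ℝ≥0∞) * (pm Dp * c2)
      + ((2 ^ (q1 - 1) : ℕ) : ℝ≥0∞) * (pm Dr * c2) + (N3 : ℝ≥0∞) * 2⁻¹ ^ (q1 + q0) := by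
    rw [hsum, ← hsumf]
    exact Finset.sum_le_sum (fun s _ => hpoint s)
  have hT1 : ((2 ^ (q0 - 1) : ℕ) : ℝ≥0∞) * (pm Dp * c2) = pm Dp * 2⁻¹ ^ (q1 - 1) := by
    rw [hc2, mul_comm (pm Dp), ← mul_assoc, hcpow (q0 - 1) (q1 - 1) _ g1]
    exact mul_comm _ _
  have hT2 : ((2 ^ (q1 - 1) : ℕ) : ℝ≥0∞) * (pm Dr * c2) = pm Dr * 2⁻¹ ^ (q0 - 1) := by
    rw [hc2, mul_comm (pm Dr), ← mul_assoc, hcpow (q1 - 1) (q0 - 1) _ g2]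
    exact mul_comm _ _
  have hN3term : (N3 : ℝ≥0∞) * 2⁻¹ ^ (q1 + q0) + 2⁻¹ ^ (q1 + q0)
      = 2⁻¹ ^ (q1 + 1) + 2⁻¹ ^ (q0 + 1) := by
    have hcast : (N3 : ℝ≥0∞) * 2⁻¹ ^ (q1 + q0) + 2⁻¹ ^ (q1 + q0)
        = ((N3 + 1 : ℕ) : ℝ≥0∞) * 2⁻¹ ^ (q1 + q0) := by
      push_cast
      ring
    rw [hcast, hN3]
    push_cast
    rw [add_mul]
    congr 1
    · have := hcpow (q0 - 1) (q1 + 1) _ g3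
      push_cast at this
      exact this
    · have := hcpow (q1 - 1) (q0 + 1) _ g4
      push_cast at this
      exact this
  have hmain : P E + 2⁻¹ ^ (q1 + q0)
      ≤ pm Dp * 2⁻¹ ^ (q1 - 1) + pm Dr * 2⁻¹ ^ (q0 - 1)
        + (2⁻¹ ^ (q1 + 1) + 2⁻¹ ^ (q0 + 1)) := by
    calc P E + 2⁻¹ ^ (q1 + q0)
        ≤ (((2 ^ (q0 - 1) : ℕ) : ℝ≥0∞) * (pm Dp * c2)
            + ((2 ^ (q1 - 1) : ℕ) : ℝ≥0∞) * (pm Dr * c2) + (N3 : ℝ≥0∞) * 2⁻¹ ^ (q1 + q0))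
            + 2⁻¹ ^ (q1 + q0) := by
          gcongr
      _ = pm Dp * 2⁻¹ ^ (q1 - 1) + pm Dr * 2⁻¹ ^ (q0 - 1)
            + ((N3 : ℝ≥0∞) * 2⁻¹ ^ (q1 + q0) + 2⁻¹ ^ (q1 + q0)) := by
          rw [hT1, hT2]
          ring
      _ = _ := by rw [hN3term]
  have hquarter : ∀ m : ℕ, (4⁻¹ : ℝ≥0∞) * 2⁻¹ ^ (m - 1) = 2⁻¹ ^ (m + 1) ∨ True := fun _ => Or.inr trivial
  have hhalfdouble : ∀ m : ℕ, 0 < m → (2⁻¹ : ℝ≥0∞) ^ (m + 1) + 2⁻¹ ^ (m + 1) = 2⁻¹ ^ m := by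
    intro m hm
    rw [← two_mul, pow_succ, mul_comm (2 : ℝ≥0∞), mul_assoc,
      ENNReal.inv_mul_cancel (by norm_num) (by norm_num), mul_one]
  -- case split
  rcases le_total q1 q0 with hq | hq
  · -- q1 ≤ q0
    have hpair : pm Dp * 2⁻¹ ^ (q1 - 1) + pm Dr * 2⁻¹ ^ (q0 - 1) ≤ 2⁻¹ ^ (q1 + 1) := by
      calc pm Dp * 2⁻¹ ^ (q1 - 1) + pm Dr * 2⁻¹ ^ (q0 - 1)
          ≤ pm Dp * 2⁻¹ ^ (q1 - 1) + pm Dr * 2⁻¹ ^ (q1 - 1) :=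
            add_le_add le_rfl
              (mul_le_mul_right (half_pow_le (Nat.sub_le_sub_right hq 1)) _)
        _ = (pm Dp + pm Dr) * 2⁻¹ ^ (q1 - 1) := (add_mul _ _ _).symm
        _ ≤ 4⁻¹ * 2⁻¹ ^ (q1 - 1) := by gcongr
        _ = 2⁻¹ ^ (q1 + 1) := by rw [quarter_eq, ← pow_add, g5]
    have hbound : P E + 2⁻¹ ^ (q1 + q0) ≤ 2⁻¹ ^ q1 + 2⁻¹ ^ (q0 + 1) := by
      calc P E + 2⁻¹ ^ (q1 + q0)
          ≤ pm Dp * 2⁻¹ ^ (q1 - 1) + pm Dr * 2⁻¹ ^ (q0 - 1)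
              + (2⁻¹ ^ (q1 + 1) + 2⁻¹ ^ (q0 + 1)) := hmain
        _ ≤ 2⁻¹ ^ (q1 + 1) + (2⁻¹ ^ (q1 + 1) + 2⁻¹ ^ (q0 + 1)) := add_le_add hpair le_rfl
        _ = (2⁻¹ ^ (q1 + 1) + 2⁻¹ ^ (q1 + 1)) + 2⁻¹ ^ (q0 + 1) := by ring
        _ = 2⁻¹ ^ q1 + 2⁻¹ ^ (q0 + 1) := by rw [hhalfdouble q1 hq1]
    rw [min_eq_left hq, max_eq_right hq]
    have hofr : ENNReal.ofReal ((1/2 : ℝ) ^ q1 + (1/2 : ℝ) ^ (q0 + 1) - (1/2 : ℝ) ^ (q1 + q0))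
        = 2⁻¹ ^ q1 + 2⁻¹ ^ (q0 + 1) - 2⁻¹ ^ (q1 + q0) := by
      rw [ENNReal.ofReal_sub _ (by positivity),
        ENNReal.ofReal_add (by positivity) (by positivity),
        ofReal_half_pow, ofReal_half_pow, ofReal_half_pow]
    rw [hofr]
    exact ENNReal.le_sub_of_add_le_right (by
      exact ENNReal.pow_ne_top (by norm_num)) hbound
  · -- q0 ≤ q1
    have hpair : pm Dp * 2⁻¹ ^ (q1 - 1) + pm Dr * 2⁻¹ ^ (q0 - 1) ≤ 2⁻¹ ^ (q0 + 1) := by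
      calc pm Dp * 2⁻¹ ^ (q1 - 1) + pm Dr * 2⁻¹ ^ (q0 - 1)
          ≤ pm Dp * 2⁻¹ ^ (q0 - 1) + pm Dr * 2⁻¹ ^ (q0 - 1) :=
            add_le_add
              (mul_le_mul_right (half_pow_le (Nat.sub_le_sub_right hq 1)) _) le_rfl
        _ = (pm Dp + pm Dr) * 2⁻¹ ^ (q0 - 1) := (add_mul _ _ _).symm
        _ ≤ 4⁻¹ * 2⁻¹ ^ (q0 - 1) := by gcongr
        _ = 2⁻¹ ^ (q0 + 1) := by rw [quarter_eq, ← pow_add, g6]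
    have hbound : P E + 2⁻¹ ^ (q1 + q0) ≤ 2⁻¹ ^ q0 + 2⁻¹ ^ (q1 + 1) := by
      calc P E + 2⁻¹ ^ (q1 + q0)
          ≤ pm Dp * 2⁻¹ ^ (q1 - 1) + pm Dr * 2⁻¹ ^ (q0 - 1)
              + (2⁻¹ ^ (q1 + 1) + 2⁻¹ ^ (q0 + 1)) := hmain
        _ ≤ 2⁻¹ ^ (q0 + 1) + (2⁻¹ ^ (q1 + 1) + 2⁻¹ ^ (q0 + 1)) := add_le_add hpair le_rfl
        _ = (2⁻¹ ^ (q0 + 1) + 2⁻¹ ^ (q0 + 1)) + 2⁻¹ ^ (q1 + 1) := by ring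
        _ = 2⁻¹ ^ q0 + 2⁻¹ ^ (q1 + 1) := by rw [hhalfdouble q0 hq0]
    rw [min_eq_right hq, max_eq_left hq]
    have hofr : ENNReal.ofReal ((1/2 : ℝ) ^ q0 + (1/2 : ℝ) ^ (q1 + 1) - (1/2 : ℝ) ^ (q1 + q0))
        = 2⁻¹ ^ q0 + 2⁻¹ ^ (q1 + 1) - 2⁻¹ ^ (q1 + q0) := by
      rw [ENNReal.ofReal_sub _ (by positivity),
        ENNReal.ofReal_add (by positivity) (by positivity),
        ofReal_half_pow, ofReal_half_pow, ofReal_half_pow]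
    rw [hofr]
    exact ENNReal.le_sub_of_add_le_right (by
      exact ENNReal.pow_ne_top (by norm_num)) hbound
end
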